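/- arXiv:2303.15815 — 4 statements merged into one kernel-verified Lean document; each statement's English description precedes it below -/
import Mathlib

section
/- If σ is a non-identity permutation of {1,...,n}, then any quandle isomorphism f: P_n^σ → P_n^τ satisfies f(0) = 0. -/
/-- The operation of `P_n^σ` on `{0,1,...,n}`: `x*y = x` if `y ≠ 0`, `x*0 = σ x`
(with `σ` a permutation fixing `0`, encoding a permutation of `{1,...,n}`). -/
def pOp {n : ℕ} (σ : Equiv.Perm (Fin (n + 1))) (x y : Fin (n + 1)) : Fin (n + 1) :=
  if y = 0 then σ x else x

section pOp

variable {n : ℕ} (σ : Equiv.Perm (Fin (n + 1)))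

theorem pOp_zero (x : Fin (n + 1)) : pOp σ x 0 = σ x :=
  if_pos rfl

theorem pOp_of_ne_zero {x y : Fin (n + 1)} (hy : y ≠ 0) : pOp σ x y = x :=
  if_neg hy

end pOp

/-- Right multiplication by `0` in `P_n^σ` is `σ`; if `f 0 ≠ 0`, then `f` carries it to right
multiplication by a nonzero element of `P_n^τ`, which is the identity. -/
theorem eq_one_of_map_zero_ne_zero {n : ℕ} {σ τ : Equiv.Perm (Fin (n + 1))}
    {f : Fin (n + 1) → Fin (n + 1)} (hinj : f.Injective)
    (hf : ∀ x y, f (pOp σ x y) = pOp τ (f x) (f y)) (hf0 : f 0 ≠ 0) : σ = 1 :=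
  Equiv.ext fun x => hinj <| by simpa only [pOp_zero, pOp_of_ne_zero τ hf0, Equiv.Perm.one_apply] using hf x 0

theorem iso_fixes_zero_general {n : ℕ} (σ τ : Equiv.Perm (Fin (n + 1)))
    (hσ : σ ≠ 1)
    (f : Fin (n + 1) ≃ Fin (n + 1))
    (hf : ∀ x y, f (pOp σ x y) = pOp τ (f x) (f y)) :
    f 0 = 0 := by
  by_contra hf0
  exact hσ (eq_one_of_map_zero_ne_zero f.injective hf hf0)

/-- If `σ ≠ id`, any quandle isomorphism `f : P_n^σ → P_n^τ` fixes `0`. -/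
theorem iso_fixes_zero {n : ℕ} (σ τ : Equiv.Perm (Fin (n + 1)))
    (hσ0 : σ 0 = 0) (hτ0 : τ 0 = 0) (hσ : σ ≠ 1)
    (f : Fin (n + 1) ≃ Fin (n + 1))
    (hf : ∀ x y, f (pOp σ x y) = pOp τ (f x) (f y)) :
    f 0 = 0 :=
  iso_fixes_zero_general σ τ hσ f hf
end

section
/- If σ ≠ id is a permutation of {1,...,n}, then the inner automorphism group of the quandle P_n^σ is cyclic of order equal to the order of σ. -/
/-- The inner automorphism group of `P_n^σ`: the subgroup of permutations generated by
the right translations `S_y(x) = x*y`. -/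
def pInn {n : ℕ} (σ : Equiv.Perm (Fin (n + 1))) : Subgroup (Equiv.Perm (Fin (n + 1))) :=
  Subgroup.closure {f : Equiv.Perm (Fin (n + 1)) | ∃ y, ∀ x, f x = pOp σ x y}

section

variable {n : ℕ} (σ : Equiv.Perm (Fin (n + 1)))

theorem eq_one_or_eq_of_forall_apply_eq_pOp {f : Equiv.Perm (Fin (n + 1))} {y : Fin (n + 1)}
    (hf : ∀ x, f x = pOp σ x y) : f = 1 ∨ f = σ := by
  by_cases hy : y = 0
  · exact .inr (Equiv.ext fun x => by rw [hf, hy, pOp_zero])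
  · exact .inl (Equiv.ext fun x => by rw [hf, pOp_of_ne_zero σ hy, Equiv.Perm.one_apply])

theorem pInn_eq_zpowers : pInn σ = Subgroup.zpowers σ := by
  apply le_antisymm
  · rw [pInn, Subgroup.closure_le]
    rintro f ⟨y, hf⟩
    rcases eq_one_or_eq_of_forall_apply_eq_pOp σ hf with rfl | rfl
    · exact (Subgroup.zpowers σ).one_mem
    · exact Subgroup.mem_zpowers f
  · rw [Subgroup.zpowers_le]
    exact Subgroup.subset_closure ⟨0, pOp_zero σ⟩

end

theorem inn_cyclic_order_general {n : ℕ} (σ : Equiv.Perm (Fin (n + 1))) :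
    IsCyclic (pInn σ) ∧ Nat.card (pInn σ) = orderOf σ := by
  rw [pInn_eq_zpowers]
  exact ⟨Subgroup.isCyclic_zpowers σ, Nat.card_zpowers σ⟩

/-- For `σ ≠ id`, `Inn(P_n^σ)` is cyclic of order equal to the order of `σ`. -/
theorem inn_cyclic_order {n : ℕ} (σ : Equiv.Perm (Fin (n + 1)))
    (hσ0 : σ 0 = 0) (hσ : σ ≠ 1) :
    IsCyclic (pInn σ) ∧ Nat.card (pInn σ) = orderOf σ :=
  inn_cyclic_order_general σ
end

section
/- Let σ be a non-identity permutation of {1,...,n} fixing exactly α elements. The quandle polynomial of P_n^σ equals α·s^{n+1}t^{n+1} + (n−α)·s^n t^{n+1} + s^{n+1}t^{1+α}. -/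
open Finset

lemma card_fixedPoints_eq_card_fixedPoints_ne_add_one {ι : Type*} [Fintype ι] [DecidableEq ι]
    (f : ι → ι) {a : ι} (ha : f a = a) :
    Fintype.card {x // f x = x} = Fintype.card {x // x ≠ a ∧ f x = x} + 1 := by
  rw [Fintype.card_subtype, Fintype.card_subtype, ← card_insert_of_notMem (a := a) (by simp)]
  congr 1
  ext x
  by_cases hx : x = a <;> simp [hx, ha]

section

variable {n : ℕ} (σ : Equiv.Perm (Fin (n + 1)))

lemma card_pOp_left_eq_self (x : Fin (n + 1)) :
    Fintype.card {y // pOp σ x y = x} = if σ x = x then n + 1 else n := by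
  by_cases h : σ x = x
  · simp [pOp, h]
  · simp [pOp, h, Fintype.card_subtype_compl]

lemma card_pOp_right_eq_self_of_ne_zero {x : Fin (n + 1)} (hx : x ≠ 0) :
    Fintype.card {y // pOp σ y x = y} = n + 1 := by
  simp [pOp, hx]

lemma card_pOp_right_eq_self_zero (hσ0 : σ 0 = 0) :
    Fintype.card {y // pOp σ y 0 = y} = 1 + Fintype.card {x // x ≠ 0 ∧ σ x = x} := by
  simpa [pOp, add_comm] using card_fixedPoints_eq_card_fixedPoints_ne_add_one σ hσ0

end

theorem quandle_polynomial_pn_general {n : ℕ} (σ : Equiv.Perm (Fin (n + 1)))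
    (hσ0 : σ 0 = 0)
    (α : ℕ) (hα : α = Fintype.card {x : Fin (n + 1) // x ≠ 0 ∧ σ x = x})
    (R : Type) [CommSemiring R] (s t : R) :
    ∑ x : Fin (n + 1),
        s ^ (Fintype.card {y : Fin (n + 1) // pOp σ x y = x}) *
          t ^ (Fintype.card {y : Fin (n + 1) // pOp σ y x = y}) =
      (α : R) * s ^ (n + 1) * t ^ (n + 1) +
        ((n - α : ℕ) : R) * s ^ n * t ^ (n + 1) +
        s ^ (n + 1) * t ^ (1 + α) := by
  have hfixed : #{x ∈ univ.erase 0 | σ x = x} = α := by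
    rw [hα, Fintype.card_subtype]
    congr 1
    ext x
    simp [and_comm]
  have hmoved : #{x ∈ univ.erase 0 | ¬σ x = x} = n - α := by
    have := card_filter_add_card_filter_not (s := univ.erase (0 : Fin (n + 1))) fun x ↦ σ x = x
    rw [card_erase_of_mem (mem_univ _), card_univ, Fintype.card_fin, add_tsub_cancel_right,
      hfixed] at this
    omega
  rw [← add_sum_erase _ _ (mem_univ 0), card_pOp_left_eq_self, if_pos hσ0,
    card_pOp_right_eq_self_zero σ hσ0, ← hα,
    sum_congr rfl fun x hx => by
      rw [card_pOp_left_eq_self, card_pOp_right_eq_self_of_ne_zero σ (ne_of_mem_erase hx),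
        pow_ite, ite_mul],
    sum_ite, sum_const, sum_const, hfixed, hmoved, nsmul_eq_mul, nsmul_eq_mul]
  ring

/-- The quandle polynomial of `P_n^σ`, for `σ ≠ id` with `α` fixed points among
`{1,...,n}`, is `α s^{n+1}t^{n+1} + (n-α) s^n t^{n+1} + s^{n+1} t^{1+α}`
(stated via evaluation at arbitrary elements of a commutative semiring). -/
theorem quandle_polynomial_pn {n : ℕ} (σ : Equiv.Perm (Fin (n + 1)))
    (hσ0 : σ 0 = 0) (hσ : σ ≠ 1)
    (α : ℕ) (hα : α = Fintype.card {x : Fin (n + 1) // x ≠ 0 ∧ σ x = x})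
    (R : Type) [CommSemiring R] (s t : R) :
    ∑ x : Fin (n + 1),
        s ^ (Fintype.card {y : Fin (n + 1) // pOp σ x y = x}) *
          t ^ (Fintype.card {y : Fin (n + 1) // pOp σ y x = y}) =
      (α : R) * s ^ (n + 1) * t ^ (n + 1) +
        ((n - α : ℕ) : R) * s ^ n * t ^ (n + 1) +
        s ^ (n + 1) * t ^ (1 + α) :=
  quandle_polynomial_pn_general σ hσ0 α hα R s t
end

section
/- Let σ be a permutation of {1,...,n} that is not an involution (σ² ≠ id). Then the quandle P_n^σ admits no good involution. -/
/-- The dual operation `x ¯* y` of `P_n^σ`: the unique `z` with `z*y = x`. -/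
def pInvOp {n : ℕ} (σ : Equiv.Perm (Fin (n + 1))) (x y : Fin (n + 1)) : Fin (n + 1) :=
  if y = 0 then σ⁻¹ x else x

/-! Every right translation `· * r` of `P_n^σ` is `σ` or the identity. If a good involution `ρ`
existed, the translation by `ρ 0` would be `· ¯* 0 = σ⁻¹`, so `σ⁻¹` would be `σ` or `1`, and in
either case `σ * σ = 1`. -/

theorem mul_self_eq_one_of_pOp_eq_inv {n : ℕ} (σ : Equiv.Perm (Fin (n + 1))) (r : Fin (n + 1))
    (h : ∀ x, pOp σ x r = σ⁻¹ x) : σ * σ = 1 := by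
  by_cases hr : r = 0
  · have hσ : σ = σ⁻¹ := Equiv.ext fun x => by simpa [pOp, hr] using h x
    exact mul_eq_one_iff_eq_inv.mpr hσ
  · have hσ : σ⁻¹ = 1 := Equiv.ext fun x => by simpa [pOp, hr] using (h x).symm
    rw [inv_eq_one.mp hσ, mul_one]

theorem no_good_involution_general {n : ℕ} (σ : Equiv.Perm (Fin (n + 1)))
    (hσ : σ * σ ≠ 1) :
    ¬ ∃ ρ : Fin (n + 1) → Fin (n + 1), Function.Involutive ρ ∧
        (∀ x y, ρ (pOp σ x y) = pOp σ (ρ x) y) ∧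
        (∀ x y, pOp σ x (ρ y) = pInvOp σ x y) := by
  rintro ⟨ρ, -, -, hρ⟩
  exact hσ (mul_self_eq_one_of_pOp_eq_inv σ (ρ 0) fun x => by simpa [pInvOp] using hρ x 0)

/-- If `σ` is not an involution, then `P_n^σ` has no good involution. -/
theorem no_good_involution {n : ℕ} (σ : Equiv.Perm (Fin (n + 1)))
    (hσ0 : σ 0 = 0) (hσ : σ * σ ≠ 1) :
    ¬ ∃ ρ : Fin (n + 1) → Fin (n + 1), Function.Involutive ρ ∧
        (∀ x y, ρ (pOp σ x y) = pOp σ (ρ x) y) ∧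
        (∀ x y, pOp σ x (ρ y) = pInvOp σ x y) :=
  no_good_involution_general σ hσ
end
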